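/- Let P, P' be symmetric idempotent n×n real matrices with P'P = P, and suppose P' − P = Σᵢ₌₁^r wᵢwᵢᵀ for orthonormal vectors w₁,…,w_r ∈ ℝⁿ. Let y ∈ ℝⁿ with eᵀe > 0 where e = y − Py. Then δ := (yᵀP'y − yᵀPy)/(yᵀy − yᵀPy) = Σᵢ₌₁^r (eᵀwᵢ)² / (eᵀe). -/
import Mathlib


open Matrix

lemma vecMulVec_mulVec_aux {n : ℕ} (u v x : Fin n → ℝ) :
    (vecMulVec u v) *ᵥ x = (v ⬝ᵥ x) • u := by
  ext i
  simp [vecMulVec_apply, mulVec, dotProduct, Finset.mul_sum, mul_assoc, mul_comm, mul_left_comm]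

lemma symm_dot_aux {n : ℕ} (P : Matrix (Fin n) (Fin n) ℝ) (hPs : P.IsSymm) (u v : Fin n → ℝ) :
    u ⬝ᵥ P *ᵥ v = P *ᵥ u ⬝ᵥ v := by
  rw [dotProduct_mulVec, ← mulVec_transpose, hPs.eq]

lemma sum_mulVec_aux {n r : ℕ} (M : Fin r → Matrix (Fin n) (Fin n) ℝ) (x : Fin n → ℝ) :
    (∑ i, M i) *ᵥ x = ∑ i, (M i) *ᵥ x := by
  ext k
  simp only [mulVec, dotProduct, Finset.sum_apply, Matrix.sum_apply, Finset.sum_mul]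
  rw [Finset.sum_comm]

lemma dot_sum_aux {n r : ℕ} (y : Fin n → ℝ) (v : Fin r → Fin n → ℝ) :
    y ⬝ᵥ ∑ i, v i = ∑ i, y ⬝ᵥ v i := by
  simp only [dotProduct, Finset.sum_apply, Finset.mul_sum]
  rw [Finset.sum_comm]

theorem granger_delta_correlation_decomposition {n r : ℕ}
    (P P' : Matrix (Fin n) (Fin n) ℝ)
    (hPs : P.IsSymm) (hP's : P'.IsSymm)
    (hP : P * P = P) (hP' : P' * P' = P') (hPP : P' * P = P)
    (w : Fin r → Fin n → ℝ)
    (hortho : ∀ i j, w i ⬝ᵥ w j = if i = j then (1 : ℝ) else 0)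
    (hdecomp : P' - P = ∑ i, Matrix.vecMulVec (w i) (w i))
    (y : Fin n → ℝ)
    (he : (y - P.mulVec y) ⬝ᵥ (y - P.mulVec y) > 0) :
    let e := y - P.mulVec y
    (y ⬝ᵥ P'.mulVec y - y ⬝ᵥ P.mulVec y) / (y ⬝ᵥ y - y ⬝ᵥ P.mulVec y) =
      (∑ i, (e ⬝ᵥ w i) ^ 2) / (e ⬝ᵥ e) := by
  intro e
  -- P * P' = P
  have hPP' : P * P' = P := by
    have : (P * P')ᵀ = P := by rw [Matrix.transpose_mul, hPs.eq, hP's.eq, hPP]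
    calc P * P' = ((P * P')ᵀ)ᵀ := by rw [Matrix.transpose_transpose]
    _ = Pᵀ := by rw [this]
    _ = P := hPs.eq
  -- (P' - P) *ᵥ w j = w j
  have hfix : ∀ j, (P' - P) *ᵥ w j = w j := by
    intro j
    rw [hdecomp]
    have : (∑ i, Matrix.vecMulVec (w i) (w i)) *ᵥ w j
        = ∑ i, (w i ⬝ᵥ w j) • w i := by
      rw [sum_mulVec_aux _ _]
      exact Finset.sum_congr rfl fun i _ => vecMulVec_mulVec_aux _ _ _
    rw [this]
    rw [Finset.sum_congr rfl fun i _ => by rw [hortho i j]]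
    simp
  -- P *ᵥ w j = 0
  have hPw : ∀ j, P *ᵥ w j = 0 := by
    intro j
    have h0 : P * (P' - P) = 0 := by
      rw [Matrix.mul_sub, hPP', hP, sub_self]
    calc P *ᵥ w j = P *ᵥ ((P' - P) *ᵥ w j) := by rw [hfix]
    _ = (P * (P' - P)) *ᵥ w j := mulVec_mulVec _ _ _
    _ = 0 := by rw [h0]; simp
  -- e ⬝ᵥ w i = y ⬝ᵥ w i
  have hew : ∀ i, e ⬝ᵥ w i = y ⬝ᵥ w i := by
    intro i
    show (y - P *ᵥ y) ⬝ᵥ w i = y ⬝ᵥ w i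
    rw [sub_dotProduct]
    have : P *ᵥ y ⬝ᵥ w i = 0 := by
      rw [← symm_dot_aux P hPs, hPw]
      simp
    rw [this, sub_zero]
  -- denominator
  have hPy2 : P *ᵥ y ⬝ᵥ P *ᵥ y = y ⬝ᵥ P *ᵥ y := by
    rw [← symm_dot_aux P hPs, mulVec_mulVec, hP]
  have hden : e ⬝ᵥ e = y ⬝ᵥ y - y ⬝ᵥ P *ᵥ y := by
    show (y - P *ᵥ y) ⬝ᵥ (y - P *ᵥ y) = _
    rw [sub_dotProduct, dotProduct_sub, dotProduct_sub, hPy2,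
      symm_dot_aux P hPs y y]
    ring
  -- numerator
  have hnum : y ⬝ᵥ P' *ᵥ y - y ⬝ᵥ P *ᵥ y = ∑ i, (e ⬝ᵥ w i) ^ 2 := by
    have h1 : y ⬝ᵥ P' *ᵥ y - y ⬝ᵥ P *ᵥ y = y ⬝ᵥ (P' - P) *ᵥ y := by
      rw [Matrix.sub_mulVec, dotProduct_sub]
    rw [h1, hdecomp]
    have h2 : (∑ i, Matrix.vecMulVec (w i) (w i)) *ᵥ y = ∑ i, (w i ⬝ᵥ y) • w i := by
      rw [sum_mulVec_aux _ _]
      exact Finset.sum_congr rfl fun i _ => vecMulVec_mulVec_aux _ _ _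
    rw [h2, dot_sum_aux]
    refine Finset.sum_congr rfl fun i _ => ?_
    rw [hew i, dotProduct_smul, dotProduct_comm (w i) y]
    simp [smul_eq_mul]
    ring
  rw [hnum, hden]
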